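/- arXiv:math/0004180 — 8 statements merged into one kernel-verified Lean document; each statement's English description precedes it below -/
import Mathlib

section
/- Let {F₁, F₂, …} and {G₁, G₂, …} be two sequences of finite multisets of positive integers such that the Fᵢ are pairwise disjoint, the Gᵢ are pairwise disjoint, and for every i the sum of the elements of Fᵢ (with multiplicity) equals the sum of the elements of Gᵢ. Define X(π) = |{i : Fᵢ ⊆ π}| and Y(π) = |{i : Gᵢ ⊆ π}|. Then for every n and every j ≥ 0, the number of partitions of n with X(π) = j equals the number with Y(π) = j. -/
/-!
Count with binomial moments. If `J` is a finite set of indices containing every `i` with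
`F i ⊆ π` for some partition `π` of `n`, then `∑_π C(X(π), k)` counts pairs `(π, S)` with
`S ⊆ J`, `|S| = k` and `F i ⊆ π` for all `i ∈ S`. By disjointness this says `∑_{i ∈ S} F i ⊆ π`,
and removing that multiset from `π` shows that there are `p(n - ∑_{i ∈ S} sum(F i))` such `π`,
a number that only depends on the sums `sum(F i) = sum(G i)`. So `X` and `Y` have the same
binomial moments, and binomial moments determine a distribution on `ℕ`.
-/

open Finset Function Polynomial

theorem card_filter_eq_of_sum_choose_eq {α : Type*} (s : Finset α) (x y : α → ℕ)
    (h : ∀ k, ∑ a ∈ s, (x a).choose k = ∑ a ∈ s, (y a).choose k) (j : ℕ) :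
    #{a ∈ s | x a = j} = #{a ∈ s | y a = j} := by
  -- The `k`-th binomial moment is the `k`-th coefficient of `∑ (X + 1) ^ x a`; substituting
  -- `X - 1` for `X` gives `∑ X ^ x a`, whose `j`-th coefficient counts the fibre over `j`.
  have hshift : ∑ a ∈ s, (X + 1 : ℤ[X]) ^ x a = ∑ a ∈ s, (X + 1 : ℤ[X]) ^ y a := by
    ext k
    simp only [finsetSum_coeff, coeff_X_add_one_pow]
    exact_mod_cast h k
  have hcoeff := congrArg (fun p : ℤ[X] => (p.comp (X - 1)).coeff j) hshift
  simp only [Polynomial.sum_comp, pow_comp, add_comp, X_comp, one_comp, sub_add_cancel,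
    finsetSum_coeff, coeff_X_pow, sum_boole] at hcoeff
  simpa [eq_comm] using hcoeff

theorem sum_choose_card_filter {α ι : Type*} [Fintype α] (J : Finset ι) (P : α → ι → Prop)
    [∀ a i, Decidable (P a i)] (k : ℕ) :
    ∑ a, (#{i ∈ J | P a i}).choose k = ∑ S ∈ J.powersetCard k, #{a | ∀ i ∈ S, P a i} := by
  have hpowerset (a) :
      {i ∈ J | P a i}.powersetCard k = {S ∈ J.powersetCard k | ∀ i ∈ S, P a i} := by
    ext S
    simp only [mem_powersetCard, mem_filter, subset_iff]
    grind
  calc ∑ a, (#{i ∈ J | P a i}).choose k = ∑ a, #({i ∈ J | P a i}.powersetCard k) := by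
        simp only [card_powersetCard]
    _ = ∑ a, ∑ S ∈ J.powersetCard k, if ∀ i ∈ S, P a i then 1 else 0 := by
        simp only [hpowerset, card_filter]
    _ = ∑ S ∈ J.powersetCard k, #{a | ∀ i ∈ S, P a i} := by
        rw [sum_comm]
        simp only [card_filter]

theorem add_le_iff_of_disjoint {α : Type*} {a b t : Multiset α} (h : Disjoint a b) :
    a + b ≤ t ↔ a ≤ t ∧ b ≤ t := by
  classical
  rw [Multiset.add_eq_union_iff_disjoint.mpr h, Multiset.union_le_iff]

theorem finsetSum_le_iff_of_pairwise_disjoint {ι α : Type*} {F : ι → Multiset α}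
    (hF : Pairwise (Disjoint on F)) (S : Finset ι) (t : Multiset α) :
    ∑ i ∈ S, F i ≤ t ↔ ∀ i ∈ S, F i ≤ t := by
  classical
  induction S using Finset.induction_on with
  | empty => simp
  | insert a S ha ih =>
    have hdisj : Disjoint (F a) (∑ i ∈ S, F i) :=
      Multiset.disjoint_finsetSum_right.mpr fun i hi => hF (ne_of_mem_of_not_mem hi ha).symm
    rw [sum_insert ha, add_le_iff_of_disjoint hdisj, ih, forall_mem_insert]

theorem eq_zero_iff_sum_eq_zero_of_pos {A : Multiset ℕ} (hA : ∀ x ∈ A, 0 < x) :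
    A = 0 ↔ A.sum = 0 := by
  refine ⟨fun h => h ▸ Multiset.sum_zero, fun h => Multiset.eq_zero_of_forall_notMem fun x hx => ?_⟩
  exact (hA x hx).ne' (Multiset.sum_eq_zero_iff.mp h x hx)

theorem finite_setOf_sum_le {ι : Type*} {F : ι → Multiset ℕ} (hF : Pairwise (Disjoint on F))
    (hzero : {i | F i = 0}.Finite) (n : ℕ) : {i | (F i).sum ≤ n}.Finite := by
  have hmem : ∀ x, {i | x ∈ F i}.Finite := fun x =>
    Set.Subsingleton.finite fun i hi k hk => by
      by_contra hik
      exact Multiset.disjoint_left.mp (hF hik) hi hk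
  refine (hzero.union ((Set.finite_Iic n).biUnion fun x _ => hmem x)).subset fun i hi => ?_
  rcases Multiset.empty_or_exists_mem (F i) with h0 | ⟨x, hx⟩
  · exact Or.inl h0
  · exact Or.inr (Set.mem_biUnion ((Multiset.le_sum_of_mem hx).trans hi) hx)

namespace Nat.Partition

theorem sum_le_of_le_parts {n : ℕ} (π : n.Partition) {A : Multiset ℕ} (h : A ≤ π.parts) :
    A.sum ≤ n := by
  obtain ⟨B, hB⟩ := Multiset.le_iff_exists_add.mp h
  rw [← π.parts_sum, hB, Multiset.sum_add]
  exact Nat.le_add_right _ _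

def addPartsEquiv {n : ℕ} (A : Multiset ℕ) (hA : ∀ x ∈ A, 0 < x) (h : A.sum ≤ n) :
    (n - A.sum).Partition ≃ {π : n.Partition // A ≤ π.parts} where
  toFun τ := ⟨⟨τ.parts + A, fun hx => (Multiset.mem_add.mp hx).elim (τ.parts_pos ·) (hA _ ·),
    by rw [Multiset.sum_add, τ.parts_sum]; omega⟩, Multiset.le_add_left _ _⟩
  invFun π := ⟨π.1.parts - A, fun hx => π.1.parts_pos (Multiset.mem_of_le tsub_le_self hx), by
    have := congrArg Multiset.sum (tsub_add_cancel_of_le π.2)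
    rw [Multiset.sum_add, π.1.parts_sum] at this
    omega⟩
  left_inv τ := Nat.Partition.ext (by simp)
  right_inv π := Subtype.ext (Nat.Partition.ext (tsub_add_cancel_of_le π.2))

theorem card_le_parts {n : ℕ} (A : Multiset ℕ) (hA : ∀ x ∈ A, 0 < x) :
    Fintype.card {π : n.Partition // A ≤ π.parts} =
      if A.sum ≤ n then Fintype.card (n - A.sum).Partition else 0 := by
  split_ifs with h
  · exact (Fintype.card_congr (addPartsEquiv A hA h)).symm
  · exact Fintype.card_eq_zero_iff.mpr ⟨fun π => h (π.1.sum_le_of_le_parts π.2)⟩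

end Nat.Partition

theorem card_le_parts_eq_of_sum_eq {n : ℕ} {A B : Multiset ℕ} (hA : ∀ x ∈ A, 0 < x)
    (hB : ∀ x ∈ B, 0 < x) (hAB : A.sum = B.sum) :
    Fintype.card {π : n.Partition // A ≤ π.parts} =
      Fintype.card {π : n.Partition // B ≤ π.parts} := by
  rw [Nat.Partition.card_le_parts A hA, Nat.Partition.card_le_parts B hB, hAB]

theorem card_le_parts_finsetSum {ι : Type*} {F : ι → Multiset ℕ} (hF : Pairwise (Disjoint on F))
    (n : ℕ) (S : Finset ι) :
    #{π : n.Partition | ∀ i ∈ S, F i ≤ π.parts} =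
      Fintype.card {π : n.Partition // ∑ i ∈ S, F i ≤ π.parts} := by
  simp only [Fintype.card_subtype, finsetSum_le_iff_of_pairwise_disjoint hF]

theorem sum_choose_card_le_parts_eq {ι : Type*} {F G : ι → Multiset ℕ}
    (hFpos : ∀ i, ∀ x ∈ F i, 0 < x) (hGpos : ∀ i, ∀ x ∈ G i, 0 < x)
    (hFdisj : Pairwise (Disjoint on F)) (hGdisj : Pairwise (Disjoint on G))
    (hsum : ∀ i, (F i).sum = (G i).sum) (J : Finset ι) (n k : ℕ) :
    ∑ π : n.Partition, (#{i ∈ J | F i ≤ π.parts}).choose k =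
      ∑ π : n.Partition, (#{i ∈ J | G i ≤ π.parts}).choose k := by
  classical
  simp only [sum_choose_card_filter, card_le_parts_finsetSum hFdisj, card_le_parts_finsetSum hGdisj]
  refine sum_congr rfl fun S _ => card_le_parts_eq_of_sum_eq ?_ ?_ ?_
  · simpa [Multiset.mem_sum] using fun x i _ => hFpos i x
  · simpa [Multiset.mem_sum] using fun x i _ => hGpos i x
  · simp only [Multiset.sum_sum, hsum]

theorem card_filter_card_le_parts_eq {ι : Type*} {F G : ι → Multiset ℕ}
    (hFpos : ∀ i, ∀ x ∈ F i, 0 < x) (hGpos : ∀ i, ∀ x ∈ G i, 0 < x)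
    (hFdisj : Pairwise (Disjoint on F)) (hGdisj : Pairwise (Disjoint on G))
    (hsum : ∀ i, (F i).sum = (G i).sum) (J : Finset ι) (n j : ℕ) :
    #{π : n.Partition | #{i ∈ J | F i ≤ π.parts} = j} =
      #{π : n.Partition | #{i ∈ J | G i ≤ π.parts} = j} :=
  card_filter_eq_of_sum_choose_eq _ _ _
    (sum_choose_card_le_parts_eq hFpos hGpos hFdisj hGdisj hsum J n) j

theorem ncard_setOf_le_parts {ι : Type*} {F : ι → Multiset ℕ} {n : ℕ} {J : Finset ι}
    (hJ : ∀ i, (F i).sum ≤ n → i ∈ J) (π : n.Partition) :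
    {i | F i ≤ π.parts}.ncard = #{i ∈ J | F i ≤ π.parts} := by
  rw [← Set.ncard_coe_finset]
  congr 1
  ext i
  simpa using fun h => hJ i (π.sum_le_of_le_parts h)

-- Junk value: `Set.ncard` of an infinite set is `0`.
theorem ncard_setOf_le_eq_zero_of_infinite {ι α : Type*} {F : ι → Multiset α}
    (hzero : {i | F i = 0}.Infinite) (t : Multiset α) : {i | F i ≤ t}.ncard = 0 :=
  (hzero.mono fun i (hi : F i = 0) => show F i ≤ t from hi ▸ Multiset.zero_le t).ncard

theorem disjoint_multiset_equidistribution
    (F G : ℕ → Multiset ℕ)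
    (hFpos : ∀ i, ∀ x ∈ F i, 0 < x) (hGpos : ∀ i, ∀ x ∈ G i, 0 < x)
    (hFdisj : ∀ i k, i ≠ k → Disjoint (F i) (F k))
    (hGdisj : ∀ i k, i ≠ k → Disjoint (G i) (G k))
    (hsum : ∀ i, (F i).sum = (G i).sum) :
    ∀ n j : ℕ,
      Nat.card {π : Nat.Partition n // {i : ℕ | F i ≤ π.parts}.ncard = j} =
      Nat.card {π : Nat.Partition n // {i : ℕ | G i ≤ π.parts}.ncard = j} := by
  intro n j
  have hzero : {i | G i = 0} = {i | F i = 0} := by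
    ext i
    change G i = 0 ↔ F i = 0
    rw [eq_zero_iff_sum_eq_zero_of_pos (hFpos i),
      eq_zero_iff_sum_eq_zero_of_pos (hGpos i), hsum]
  by_cases hfin : {i | F i = 0}.Finite
  · set J := (finite_setOf_sum_le hFdisj hfin n).toFinset
    have hJF (i) (h : (F i).sum ≤ n) : i ∈ J := by simpa [J] using h
    have hJG (i) (h : (G i).sum ≤ n) : i ∈ J := hJF i (hsum i ▸ h)
    simp only [Nat.card_eq_fintype_card, Fintype.card_subtype, ncard_setOf_le_parts hJF,
      ncard_setOf_le_parts hJG]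
    exact card_filter_card_le_parts_eq hFpos hGpos hFdisj hGdisj hsum J n j
  · have hGinf : {i | G i = 0}.Infinite := hzero ▸ hfin
    exact Nat.card_congr (Equiv.subtypeEquivRight fun π => by
      rw [ncard_setOf_le_eq_zero_of_infinite hfin, ncard_setOf_le_eq_zero_of_infinite hGinf])
end

section
/- For every n and j ≥ 0, the number of partitions of n in which exactly j distinct part sizes are perfect squares equals the number of partitions of n in which exactly j distinct part sizes i occur with multiplicity at least i. -/
/-!
For a finite set `T` of positive integers, removing one part `i²` for each `i ∈ T`, resp. `i`
parts equal to `i` for each `i ∈ T`, shows that the partitions of `n` having every `i²` as a part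
and those having every `i ∈ T` with multiplicity at least `i` are both equinumerous with the
partitions of `n - ∑_{i ∈ T} i²`. So the set `{i | i² is a part}` and the set of parts `i` of
multiplicity at least `i` contain a given `T` equally often, and by Möbius inversion over the
Boolean lattice they are equidistributed; in particular so are their sizes.
-/

open Finset

section UpperCounts

variable {α β γ : Type*} [Fintype α] [Fintype β] [DecidableEq γ]

theorem card_filter_eq_sum_card_fiber {S : α → Finset γ} {W : Finset (Finset γ)}
    (hW : ∀ a, S a ∈ W) (P : Finset γ → Prop) [DecidablePred P] :
    #{a | P (S a)} = ∑ V ∈ W with P V, #{a | S a = V} := by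
  rw [card_eq_sum_card_fiberwise (f := S) (t := W.filter P) fun a ha => by simp_all]
  refine sum_congr rfl fun V hV => ?_
  rw [filter_filter]
  exact congrArg card <|
    filter_congr fun a _ => ⟨And.right, fun h => ⟨h ▸ (mem_filter.1 hV).2, h⟩⟩

variable {S : α → Finset γ} {S' : β → Finset γ}

/-- Möbius inversion on the Boolean lattice. -/
theorem card_filter_eq_of_card_filter_subset_eq
    (h : ∀ T, #{a | T ⊆ S a} = #{b | T ⊆ S' b}) (U : Finset γ) :
    #{a | S a = U} = #{b | S' b = U} := by
  set W := univ.image S ∪ univ.image S'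
  have hS : ∀ a, S a ∈ W := fun a => by simp [W]
  have hS' : ∀ b, S' b ∈ W := fun b => by simp [W]
  have h_notMem : ∀ U ∉ W, #{a | S a = U} = #{b | S' b = U} := fun U hU => by
    rw [filter_false_of_mem fun a _ (ha : S a = U) => hU (ha ▸ hS a),
      filter_false_of_mem fun b _ (hb : S' b = U) => hU (hb ▸ hS' b)]; rfl
  refine strongDownwardInduction (n := max (W.sup card) #U)
    (p := fun U => #{a | S a = U} = #{b | S' b = U}) (fun U ih _ => ?_) U (le_max_right _ _)
  by_cases hU : U ∈ W
  swap; · exact h_notMem U hU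
  have hU' : U ∈ W.filter (U ⊆ ·) := mem_filter.2 ⟨hU, subset_rfl⟩
  have hcount := h U
  rw [card_filter_eq_sum_card_fiber hS, card_filter_eq_sum_card_fiber hS',
    ← add_sum_erase _ _ hU', ← add_sum_erase _ _ hU'] at hcount
  refine add_right_cancel (hcount.trans (congrArg _ (sum_congr rfl fun V hV => ?_)))
  simp only [mem_erase, mem_filter] at hV
  exact (ih ((le_sup hV.2.1).trans (le_max_left _ _))
    (ssubset_of_subset_of_ne hV.2.2 (Ne.symm hV.1))).symm

theorem card_filter_comp_eq_of_card_filter_subset_eq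
    (h : ∀ T, #{a | T ⊆ S a} = #{b | T ⊆ S' b}) (P : Finset γ → Prop) [DecidablePred P] :
    #{a | P (S a)} = #{b | P (S' b)} := by
  set W := univ.image S ∪ univ.image S'
  rw [card_filter_eq_sum_card_fiber (W := W) (fun a => by simp [W]),
    card_filter_eq_sum_card_fiber (W := W) (fun b => by simp [W])]
  exact sum_congr rfl fun U _ => card_filter_eq_of_card_filter_subset_eq h U

end UpperCounts

namespace Nat.Partition

variable {n : ℕ}

def replaceParts {M M' : Multiset ℕ} (hsum : M.sum = M'.sum) (hM' : ∀ i ∈ M', 0 < i)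
    (π : Nat.Partition n) (hπ : M ≤ π.parts) : Nat.Partition n where
  parts := π.parts - M + M'
  parts_pos {i} hi := (Multiset.mem_add.1 hi).elim
    (fun h => π.parts_pos (Multiset.mem_of_le tsub_le_self h)) (hM' i)
  parts_sum := by
    rw [Multiset.sum_add, ← hsum, ← Multiset.sum_add, tsub_add_cancel_of_le hπ, π.parts_sum]

theorem replaceParts_replaceParts {M M' : Multiset ℕ} (hsum : M.sum = M'.sum)
    (hM : ∀ i ∈ M, 0 < i) (hM' : ∀ i ∈ M', 0 < i) (π : Nat.Partition n)
    (hπ : M ≤ π.parts) :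
    replaceParts hsum.symm hM (replaceParts hsum hM' π hπ) (Multiset.le_add_left _ _) = π := by
  ext1
  simp only [replaceParts, add_tsub_cancel_right, tsub_add_cancel_of_le hπ]

def subtypeLePartsEquiv {M M' : Multiset ℕ} (hsum : M.sum = M'.sum)
    (hM : ∀ i ∈ M, 0 < i) (hM' : ∀ i ∈ M', 0 < i) :
    {π : Nat.Partition n // M ≤ π.parts} ≃ {π : Nat.Partition n // M' ≤ π.parts} where
  toFun π := ⟨replaceParts hsum hM' π.1 π.2, Multiset.le_add_left _ _⟩
  invFun π := ⟨replaceParts hsum.symm hM π.1 π.2, Multiset.le_add_left _ _⟩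
  left_inv π := Subtype.ext (replaceParts_replaceParts hsum hM hM' π.1 π.2)
  right_inv π := Subtype.ext (replaceParts_replaceParts hsum.symm hM' hM π.1 π.2)

theorem card_filter_le_parts_eq {M M' : Multiset ℕ} (hsum : M.sum = M'.sum)
    (hM : ∀ i ∈ M, 0 < i) (hM' : ∀ i ∈ M', 0 < i) :
    #{π : Nat.Partition n | M ≤ π.parts} = #{π : Nat.Partition n | M' ≤ π.parts} := by
  simpa only [Fintype.card_subtype] using Fintype.card_congr (subtypeLePartsEquiv hsum hM hM')

noncomputable def squarePartRoots (π : Nat.Partition n) : Finset ℕ :=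
  π.parts.toFinset.preimage (· ^ 2) (Nat.pow_left_injective two_ne_zero).injOn

def partsOfLargeMultiplicity (π : Nat.Partition n) : Finset ℕ :=
  {i ∈ π.parts.toFinset | i ≤ π.parts.count i}

theorem subset_squarePartRoots_iff {π : Nat.Partition n} {T : Finset ℕ} :
    T ⊆ squarePartRoots π ↔ T.val.map (· ^ 2) ≤ π.parts := by
  rw [Multiset.le_iff_subset (T.nodup.map (Nat.pow_left_injective two_ne_zero))]
  simp [squarePartRoots, Finset.subset_iff, Multiset.subset_iff]

theorem subset_partsOfLargeMultiplicity_iff {π : Nat.Partition n} {T : Finset ℕ} (hT : 0 ∉ T) :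
    T ⊆ partsOfLargeMultiplicity π ↔ ∑ i ∈ T, Multiset.replicate i i ≤ π.parts := by
  rw [Multiset.le_iff_count]
  simp only [Multiset.count_sum', Multiset.count_replicate, sum_ite_eq', Finset.subset_iff,
    partsOfLargeMultiplicity, mem_filter, Multiset.mem_toFinset]
  refine ⟨fun h a => ?_, fun h x hx => ?_⟩
  · split_ifs with ha
    exacts [(h ha).2, Nat.zero_le _]
  · have hx' := h x
    rw [if_pos hx] at hx'
    exact ⟨Multiset.count_pos.1 ((Nat.pos_of_ne_zero (ne_of_mem_of_not_mem hx hT)).trans_le hx'),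
      hx'⟩

theorem card_filter_subset_squarePartRoots_eq (T : Finset ℕ) :
    #{π : Nat.Partition n | T ⊆ squarePartRoots π} =
      #{π : Nat.Partition n | T ⊆ partsOfLargeMultiplicity π} := by
  by_cases hT : 0 ∈ T
  · have h_sq : ∀ π : Nat.Partition n, ¬ T ⊆ squarePartRoots π := fun π h =>
      (π.parts_pos (by simpa [squarePartRoots] using h hT)).false
    have h_large : ∀ π : Nat.Partition n, ¬ T ⊆ partsOfLargeMultiplicity π := fun π h =>
      (π.parts_pos (by simpa [partsOfLargeMultiplicity] using h hT)).false
    simp [h_sq, h_large]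
  have hpos : ∀ i ∈ T, 0 < i := fun i hi => Nat.pos_of_ne_zero (ne_of_mem_of_not_mem hi hT)
  simp only [subset_squarePartRoots_iff, subset_partsOfLargeMultiplicity_iff hT]
  refine card_filter_le_parts_eq ?_ ?_ ?_
  · rw [← sum_eq_multiset_sum, Multiset.sum_sum]
    exact sum_congr rfl fun i _ => by rw [Multiset.sum_replicate, smul_eq_mul, sq]
  · simpa using fun i hi => pow_pos (hpos i hi) 2
  · simpa [Multiset.mem_sum] using fun i x hx hi => Multiset.eq_of_mem_replicate hi ▸ hpos x hx

theorem ncard_setOf_mem_parts_and_isSquare (π : Nat.Partition n) :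
    {i : ℕ | i ∈ π.parts ∧ IsSquare i}.ncard = #(squarePartRoots π) := by
  rw [← Finset.card_image_of_injective _ (Nat.pow_left_injective two_ne_zero),
    ← Set.ncard_coe_finset]
  congr 1
  ext i
  simp only [Set.mem_ofPred_eq, coe_image, Set.mem_image, mem_coe, squarePartRoots, mem_preimage,
    Multiset.mem_toFinset, IsSquare, ← sq]
  constructor
  · rintro ⟨hi, r, rfl⟩
    exact ⟨r, hi, rfl⟩
  · rintro ⟨r, hr, rfl⟩
    exact ⟨hr, r, rfl⟩

theorem ncard_setOf_mem_parts_and_le_count (π : Nat.Partition n) :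
    {i : ℕ | i ∈ π.parts ∧ i ≤ π.parts.count i}.ncard =
      #(partsOfLargeMultiplicity π) := by
  rw [← Set.ncard_coe_finset]
  congr 1
  ext i
  simp [partsOfLargeMultiplicity]

end Nat.Partition

theorem squares_vs_large_multiplicity (n j : ℕ) :
    Nat.card {π : Nat.Partition n //
        {i : ℕ | i ∈ π.parts ∧ IsSquare i}.ncard = j} =
    Nat.card {π : Nat.Partition n //
        {i : ℕ | i ∈ π.parts ∧ i ≤ π.parts.count i}.ncard = j} := by
  simp only [Nat.Partition.ncard_setOf_mem_parts_and_isSquare,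
    Nat.Partition.ncard_setOf_mem_parts_and_le_count,
    Nat.card_eq_fintype_card, Fintype.card_subtype]
  exact card_filter_comp_eq_of_card_filter_subset_eq
    Nat.Partition.card_filter_subset_squarePartRoots_eq (#· = j)
end

section
/- Fix an integer d > 1. For every n and j ≥ 0, the number of partitions of n with exactly j distinct part sizes divisible by d equals the number of partitions of n with exactly j distinct part sizes having multiplicity at least d. -/
/-!
Encode a partition by its multiplicity function `c : ℕ →₀ ℕ` and write every positive integer
uniquely as `d ^ k * u` with `d ∤ u`. The bijection gives `d ^ k * u` the multiplicity
`d * c (d ^ (k + 1) * u) + a_k`, where `a_k` is the `k`-th base-`d` digit of `c u`: each part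
`d * i` is split into `d` parts `i`, and the `c u` parts equal to `u` are regrouped into parts
`d ^ k * u` following the base-`d` expansion of `c u`. This preserves the sum of the parts. Since
`a_k < d`, quotient and remainder by `d` recover `c`, and the new multiplicity of `i` is at least
`d` exactly when `d * i` was a part. An injective self-map of the finite set of partitions of `n`
is a bijection.
-/

open Finsupp

namespace Finsupp

variable {α M : Type*} [AddCommMonoid M]

theorem weight_mapDomain {β : Type*} (w : β → M) (f : α → β) (c : α →₀ ℕ) :
    weight w (mapDomain f c) = weight (w ∘ f) c :=
  linearCombination_mapDomain _ _ _

theorem weight_subtypeDomain_add_weight_subtypeDomain_not (w : α → M) (p : α → Prop)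
    [DecidablePred p] (c : α →₀ ℕ) :
    weight (w ∘ Subtype.val) (c.subtypeDomain p)
      + weight (w ∘ Subtype.val) (c.subtypeDomain (¬ p ·)) = weight w c := by
  simp only [weight_apply, Finsupp.sum, support_subtypeDomain, subtypeDomain_apply,
    Function.comp_apply, Finset.sum_subtype_eq_sum_filter (fun a => c a • w a)]
  rw [Finset.sum_filter_add_sum_filter_not]

theorem sum_toMultiset_eq_weight (c : M →₀ ℕ) : (toMultiset c).sum = weight id c :=
  sum_toMultiset c

end Finsupp

namespace Nat

variable (d : ℕ)

noncomputable def digitsFinsupp (m : ℕ) : ℕ →₀ ℕ := (digits d m).toFinsupp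

theorem digitsFinsupp_zero : digitsFinsupp d 0 = 0 := by
  simp [digitsFinsupp]

theorem weight_digitsFinsupp (m : ℕ) : weight (d ^ ·) (digitsFinsupp d m) = m := by
  conv_rhs => rw [← ofDigits_digits d m, ofDigits_eq_sum_mapIdx]
  rw [digitsFinsupp, List.toFinsupp_eq_sum_mapIdx_single, map_list_sum]
  simp only [List.mapIdx_eq_zipIdx_map, List.map_map]
  congr 1
  refine List.map_congr_left fun x _ => ?_
  simp [weight_single]

theorem digitsFinsupp_injective : Function.Injective (digitsFinsupp d) :=
  Function.LeftInverse.injective (weight_digitsFinsupp d)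

variable {d}

theorem digitsFinsupp_apply_lt (hd : 1 < d) (m k : ℕ) : digitsFinsupp d m k < d := by
  rw [digitsFinsupp, List.toFinsupp_apply, getD_digits m k hd]
  exact mod_lt _ (by omega)

end Nat

namespace Nat.Partition

section Multiplicities

variable (d : ℕ)

def chainEmbedding (x : {u // ¬ d ∣ u} × ℕ) : ℕ := d ^ x.2 * x.1

noncomputable def multiplesPart (c : ℕ →₀ ℕ) : ℕ →₀ ℕ :=
  mapDomain (fun j : {j // d ∣ j} => j.1 / d) (c.subtypeDomain (d ∣ ·))

noncomputable def expandDigits (S : {u // ¬ d ∣ u} →₀ ℕ) : ℕ →₀ ℕ :=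
  mapDomain (chainEmbedding d)
    (S.mapRange (Nat.digitsFinsupp d) (Nat.digitsFinsupp_zero d)).uncurry

noncomputable def glaisherMap (c : ℕ →₀ ℕ) : ℕ →₀ ℕ :=
  d • multiplesPart d c + expandDigits d (c.subtypeDomain (¬ d ∣ ·))

theorem weight_multiplesPart (c : ℕ →₀ ℕ) :
    weight id (d • multiplesPart d c) = weight Subtype.val (c.subtypeDomain (d ∣ ·)) := by
  rw [map_nsmul, multiplesPart, weight_mapDomain, weight_apply, weight_apply, Finsupp.smul_sum]
  refine Finsupp.sum_congr fun j _ => ?_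
  simp only [Function.comp_apply, id, smul_eq_mul]
  rw [mul_left_comm, Nat.mul_div_cancel' j.2]

theorem weight_expandDigits (S : {u // ¬ d ∣ u} →₀ ℕ) :
    weight id (expandDigits d S) = weight Subtype.val S := by
  rw [expandDigits, weight_mapDomain, weight_apply, sum_uncurry_index,
    sum_mapRange_index (by simp), weight_apply]
  refine Finsupp.sum_congr fun u _ => ?_
  conv_rhs => rw [← Nat.weight_digitsFinsupp d (S u)]
  simp only [weight_apply, Finsupp.sum_mul, Function.comp_apply, id, chainEmbedding, smul_eq_mul,
    mul_assoc]

theorem weight_glaisherMap (c : ℕ →₀ ℕ) : weight id (glaisherMap d c) = weight id c := by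
  rw [glaisherMap, map_add, weight_multiplesPart, weight_expandDigits,
    ← weight_subtypeDomain_add_weight_subtypeDomain_not id (d ∣ ·) c]
  rfl

variable {d}

theorem chainEmbedding_injective (hd : d ≠ 0) : Function.Injective (chainEmbedding d) := by
  rintro ⟨⟨u, hu⟩, k⟩ ⟨⟨v, hv⟩, l⟩ h
  have hn : d ^ k * u ≠ 0 :=
    mul_ne_zero (pow_ne_zero k hd) (by rintro rfl; exact hu (dvd_zero d))
  have hku := Nat.maxPowDvdDiv_of_pow_mul_eq hn rfl hu
  have hlv := Nat.maxPowDvdDiv_of_pow_mul_eq hn h.symm hv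
  simp_all

theorem zero_notMem_range_chainEmbedding (hd : d ≠ 0) : 0 ∉ Set.range (chainEmbedding d) := by
  rintro ⟨⟨⟨u, hu⟩, k⟩, h⟩
  rcases mul_eq_zero.1 h with h | rfl
  · exact pow_ne_zero k hd h
  · exact hu (dvd_zero d)

theorem multiplesPart_apply (hd : d ≠ 0) (c : ℕ →₀ ℕ) (i : ℕ) :
    multiplesPart d c i = c (d * i) := by
  have hinj : Function.Injective (fun j : {j // d ∣ j} => j.1 / d) :=
    fun j j' h => Subtype.ext ((Nat.div_left_inj j.2 j'.2).1 h)
  simpa [multiplesPart, Nat.mul_div_cancel_left i (Nat.pos_of_ne_zero hd)] using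
    mapDomain_apply hinj (c.subtypeDomain (d ∣ ·)) ⟨d * i, dvd_mul_right d i⟩

theorem expandDigits_apply_chainEmbedding (hd : d ≠ 0) (S : {u // ¬ d ∣ u} →₀ ℕ)
    (u : {u // ¬ d ∣ u}) (k : ℕ) :
    expandDigits d S (chainEmbedding d (u, k)) = Nat.digitsFinsupp d (S u) k :=
  mapDomain_apply (chainEmbedding_injective hd) _ _

theorem expandDigits_apply_lt (hd : 1 < d) (S : {u // ¬ d ∣ u} →₀ ℕ) (i : ℕ) :
    expandDigits d S i < d := by
  by_cases hi : i ∈ Set.range (chainEmbedding d)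
  · obtain ⟨⟨u, k⟩, rfl⟩ := hi
    rw [expandDigits_apply_chainEmbedding (by omega)]
    exact Nat.digitsFinsupp_apply_lt hd _ _
  · rw [expandDigits, mapDomain_of_notMem_range _ _ hi]
    omega

theorem expandDigits_injective (hd : d ≠ 0) : Function.Injective (expandDigits d) :=
  (mapDomain_injective (chainEmbedding_injective hd)).comp <|
    (Function.LeftInverse.injective curry_uncurry).comp <|
      mapRange_injective _ _ (Nat.digitsFinsupp_injective d)

theorem glaisherMap_apply (hd : d ≠ 0) (c : ℕ →₀ ℕ) (i : ℕ) :
    glaisherMap d c i = d * c (d * i) + expandDigits d (c.subtypeDomain (¬ d ∣ ·)) i := by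
  simp [glaisherMap, multiplesPart_apply hd]

theorem glaisherMap_apply_zero (hd : d ≠ 0) {c : ℕ →₀ ℕ} (hc : c 0 = 0) :
    glaisherMap d c 0 = 0 := by
  rw [glaisherMap_apply hd, mul_zero, hc, expandDigits,
    mapDomain_of_notMem_range _ _ (zero_notMem_range_chainEmbedding hd)]
  rfl

theorem glaisherMap_apply_div_and_mod (hd : 1 < d) (c : ℕ →₀ ℕ) (i : ℕ) :
    glaisherMap d c i / d = c (d * i) ∧
      glaisherMap d c i % d = expandDigits d (c.subtypeDomain (¬ d ∣ ·)) i :=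
  (Nat.div_mod_unique (by omega)).2
    ⟨by rw [glaisherMap_apply (by omega), add_comm], expandDigits_apply_lt hd _ i⟩

theorem le_glaisherMap_apply_iff (hd : 1 < d) (c : ℕ →₀ ℕ) (i : ℕ) :
    d ≤ glaisherMap d c i ↔ c (d * i) ≠ 0 := by
  rw [← (glaisherMap_apply_div_and_mod hd c i).1, ← Nat.pos_iff_ne_zero, Nat.div_pos_iff]
  omega

theorem glaisherMap_injective (hd : 1 < d) : Function.Injective (glaisherMap d) := by
  intro c c' h
  have hS : expandDigits d (c.subtypeDomain (¬ d ∣ ·)) =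
      expandDigits d (c'.subtypeDomain (¬ d ∣ ·)) := by
    ext i
    rw [← (glaisherMap_apply_div_and_mod hd c i).2, h, (glaisherMap_apply_div_and_mod hd c' i).2]
  ext j
  by_cases hj : d ∣ j
  · obtain ⟨i, rfl⟩ := hj
    rw [← (glaisherMap_apply_div_and_mod hd c i).1, h, (glaisherMap_apply_div_and_mod hd c' i).1]
  · exact DFunLike.congr_fun (expandDigits_injective (by omega) hS) ⟨j, hj⟩

end Multiplicities

variable {d n : ℕ}

theorem toFinsupp_parts_zero (π : n.Partition) : Multiset.toFinsupp π.parts 0 = 0 := by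
  rw [Multiset.toFinsupp_apply, Multiset.count_eq_zero]
  exact fun h => (π.parts_pos h).false

noncomputable def glaisher (hd : 1 < d) (π : n.Partition) : n.Partition where
  parts := toMultiset (glaisherMap d (Multiset.toFinsupp π.parts))
  parts_pos {i} hi := by
    rw [Finsupp.mem_toMultiset, mem_support_iff] at hi
    refine Nat.pos_of_ne_zero ?_
    rintro rfl
    exact hi (glaisherMap_apply_zero (by omega) (toFinsupp_parts_zero π))
  parts_sum := by
    rw [sum_toMultiset_eq_weight, weight_glaisherMap, ← sum_toMultiset_eq_weight,
      Multiset.toFinsupp_toMultiset, π.parts_sum]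

theorem glaisher_injective (hd : 1 < d) : Function.Injective (glaisher (n := n) hd) := by
  intro π π' h
  have := congrArg (fun π => Multiset.toFinsupp π.parts) h
  simp only [glaisher, Finsupp.toMultiset_toFinsupp] at this
  ext1
  simpa using glaisherMap_injective hd this

theorem ncard_dvd_eq_ncard_le_count_glaisher (hd : 1 < d) (π : n.Partition) :
    {i : ℕ | i ∈ π.parts ∧ d ∣ i}.ncard =
      {i : ℕ | i ∈ (glaisher hd π).parts ∧ d ≤ (glaisher hd π).parts.count i}.ncard := by
  have hX : {i : ℕ | i ∈ π.parts ∧ d ∣ i} = (d * ·) '' {i | d * i ∈ π.parts} := by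
    ext j
    constructor
    · rintro ⟨hj, i, rfl⟩
      exact ⟨i, hj, rfl⟩
    · rintro ⟨i, hi, rfl⟩
      exact ⟨hi, dvd_mul_right d i⟩
  have hY : {i : ℕ | i ∈ (glaisher hd π).parts ∧ d ≤ (glaisher hd π).parts.count i} =
      {i | d * i ∈ π.parts} := by
    ext i
    simp only [glaisher, Set.mem_ofPred_eq, Finsupp.mem_toMultiset, Finsupp.count_toMultiset,
      mem_support_iff]
    rw [and_iff_right_of_imp (fun h => by omega), le_glaisherMap_apply_iff hd,
      Multiset.toFinsupp_apply, Multiset.count_ne_zero]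
  rw [hX, hY, Set.ncard_image_of_injective _ (mul_right_injective₀ (by omega))]

end Nat.Partition

theorem glaisher_equidistribution (d : ℕ) (hd : 1 < d) (n j : ℕ) :
    Nat.card {π : Nat.Partition n //
        {i : ℕ | i ∈ π.parts ∧ d ∣ i}.ncard = j} =
    Nat.card {π : Nat.Partition n //
        {i : ℕ | i ∈ π.parts ∧ d ≤ π.parts.count i}.ncard = j} := by
  have hbij := Finite.injective_iff_bijective.1 (Nat.Partition.glaisher_injective (n := n) hd)
  exact Nat.card_congr <| (Equiv.ofBijective _ hbij).subtypeEquiv fun π => by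
    rw [Nat.Partition.ncard_dvd_eq_ncard_le_count_glaisher hd π]
    rfl
end

section
/- Let M₁ be a set of positive integers with 2M₁ ⊆ M₁ (where 2M₁ = {j : j/2 ∈ M₁}), and let M₂ = M₁ \ 2M₁. Then for every n and j ≥ 0, the number of partitions of n with exactly j distinct part sizes not in M₂ equals the number of partitions of n with exactly j distinct part sizes i such that i ∉ M₁, or i ∈ M₁ and i is repeated (multiplicity ≥ 2). -/
/-!
Encode a partition by its multiplicity function `c`. Since `M₁` is closed under doubling and does
not contain `0`, every element of `M₁` is uniquely `r * 2 ^ k` with `r` a root, i.e. `r ∈ M₂`.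
The bijection keeps the parts outside `M₁`; for `i ∈ M₁` it turns the `c i / 2` pairs of parts `i`
into single parts `2 * i`, and it replaces the leftover single parts `r * 2 ^ k` of each chain by
`∑ 2 ^ k` parts equal to the root `r`. A part in `2M₁` then occurs exactly when its half was
repeated, and a part outside `M₁` exactly when it occurred before, which matches the two
statistics. The inverse reads the leftover single parts off the binary digits of the multiplicity
of each root.
-/

open Finset

namespace Nat

theorem eq_zero_of_mul_le_of_lt {a i n : ℕ} (h : a * i ≤ n) (hi : n < i) : a = 0 := by
  by_contra ha
  nlinarith [Nat.one_le_iff_ne_zero.mpr ha]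

theorem testBit_sum_two_pow (s : Finset ℕ) (k : ℕ) :
    (∑ i ∈ s, 2 ^ i).testBit k ↔ k ∈ s := by
  rw [← mem_bitIndices, ← List.mem_toFinset, Finset.toFinset_bitIndices_sum_two_pow]

theorem sum_range_filter_testBit {x K : ℕ} (hx : x < 2 ^ K) :
    ∑ k ∈ range K with x.testBit k, 2 ^ k = x := by
  conv_rhs => rw [← Finset.sum_toFinset_bitIndices_two_pow x]
  congr 1
  ext k
  simp only [mem_filter, mem_range, List.mem_toFinset, mem_bitIndices, and_iff_right_iff_imp]
  exact fun hk => (Nat.pow_lt_pow_iff_right one_lt_two).mp ((ge_two_pow_of_testBit hk).trans_lt hx)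

end Nat

namespace Andrews

def doubles (M : Set ℕ) : Set ℕ := (fun m => 2 * m) '' M

def roots (M : Set ℕ) : Set ℕ := M \ doubles M

section Chains

variable {M : Set ℕ}

theorem doubles_subset (hdouble : ∀ m ∈ M, 2 * m ∈ M) : doubles M ⊆ M := by
  rintro _ ⟨m, hm, rfl⟩
  exact hdouble m hm

theorem mul_two_pow_mem (hdouble : ∀ m ∈ M, 2 * m ∈ M) {r : ℕ} (hr : r ∈ M) (k : ℕ) :
    r * 2 ^ k ∈ M := by
  induction k with
  | zero => simpa using hr
  | succ k ih => simpa [pow_succ, mul_comm, mul_left_comm] using hdouble _ ih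

theorem exists_mem_roots_mul_two_pow (hpos : ∀ m ∈ M, 0 < m) {i : ℕ} (hi : i ∈ M) :
    ∃ r ∈ roots M, ∃ k, r * 2 ^ k = i := by
  induction i using Nat.strong_induction_on with
  | _ i ih =>
    by_cases hdbl : i ∈ doubles M
    · obtain ⟨m, hm, rfl⟩ := hdbl
      obtain ⟨r, hr, k, rfl⟩ := ih m (by linarith [hpos m hm]) hm
      exact ⟨r, hr, k + 1, by ring⟩
    · exact ⟨i, ⟨hi, hdbl⟩, 0, by simp⟩

theorem eq_of_mul_two_pow_eq (hdouble : ∀ m ∈ M, 2 * m ∈ M) {r r' k k' : ℕ}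
    (hr : r ∈ roots M) (hr' : r' ∈ roots M) (h : r * 2 ^ k = r' * 2 ^ k') :
    r = r' ∧ k = k' := by
  wlog hk : k ≤ k' generalizing r r' k k'
  · exact (this hr' hr h.symm (by omega)).imp Eq.symm Eq.symm
  obtain ⟨d, rfl⟩ := Nat.exists_eq_add_of_le hk
  have hrd : r = r' * 2 ^ d := by
    rw [pow_add, mul_comm (2 ^ k), ← mul_assoc] at h
    exact Nat.eq_of_mul_eq_mul_right (by positivity) h
  cases d with
  | zero => simpa using hrd
  | succ d =>
    exact absurd ⟨r' * 2 ^ d, mul_two_pow_mem hdouble hr'.1 d, by rw [hrd]; ring⟩ hr.2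

end Chains

open Classical in
/-- Only exponents `k ≤ n` are read at a root: this suffices for multiplicity functions of
partitions of `n`. -/
noncomputable def mergeCounts (M : Set ℕ) (n : ℕ) (c : ℕ → ℕ) (i : ℕ) : ℕ :=
  if i ∈ roots M then ∑ k ∈ range (n + 1) with Odd (c (i * 2 ^ k)), 2 ^ k
  else if i ∈ doubles M then c (i / 2) / 2
  else c i

open Classical in
/-- The `∃` is the `k`-th binary digit of `g` at the root of `i = r * 2 ^ k`. -/
noncomputable def splitCounts (M : Set ℕ) (g : ℕ → ℕ) (i : ℕ) : ℕ :=
  if i ∈ M then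
    2 * g (2 * i) + if ∃ r ∈ roots M, ∃ k, r * 2 ^ k = i ∧ (g r).testBit k then 1 else 0
  else g i

section Counts

variable {M : Set ℕ} {n : ℕ} {c g : ℕ → ℕ}

theorem mergeCounts_of_mem_roots {r : ℕ} (hr : r ∈ roots M) :
    mergeCounts M n c r = ∑ k ∈ range (n + 1) with Odd (c (r * 2 ^ k)), 2 ^ k :=
  if_pos hr

theorem mergeCounts_two_mul {m : ℕ} (hm : m ∈ M) : mergeCounts M n c (2 * m) = c m / 2 := by
  rw [mergeCounts, if_neg fun h => h.2 ⟨m, hm, rfl⟩, if_pos ⟨m, hm, rfl⟩,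
    Nat.mul_div_cancel_left m two_pos]

theorem mergeCounts_of_notMem (hdouble : ∀ m ∈ M, 2 * m ∈ M) {i : ℕ} (hi : i ∉ M) :
    mergeCounts M n c i = c i := by
  rw [mergeCounts, if_neg fun h => hi h.1, if_neg fun h => hi (doubles_subset hdouble h)]

theorem splitCounts_of_notMem {i : ℕ} (hi : i ∉ M) : splitCounts M g i = g i :=
  if_neg hi

theorem splitCounts_div_two {m : ℕ} (hm : m ∈ M) : splitCounts M g m / 2 = g (2 * m) := by
  rw [splitCounts, if_pos hm]
  split_ifs <;> omega

theorem splitCounts_mul_two_pow (hdouble : ∀ m ∈ M, 2 * m ∈ M) {r : ℕ} (hr : r ∈ roots M)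
    (k : ℕ) :
    splitCounts M g (r * 2 ^ k) = 2 * g (2 * (r * 2 ^ k)) + if (g r).testBit k then 1 else 0 := by
  have hbit : (∃ r' ∈ roots M, ∃ k', r' * 2 ^ k' = r * 2 ^ k ∧ (g r').testBit k') ↔
      (g r).testBit k := by
    refine ⟨?_, fun hb => ⟨r, hr, k, rfl, hb⟩⟩
    rintro ⟨r', hr', k', h, hb⟩
    obtain ⟨rfl, rfl⟩ := eq_of_mul_two_pow_eq hdouble hr' hr h
    exact hb
  simp only [splitCounts, if_pos (mul_two_pow_mem hdouble hr.1 k), hbit]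

theorem mergeCounts_eq_zero_of_lt (hc : ∀ i, c i * i ≤ n) {i : ℕ} (hi : n < i) :
    mergeCounts M n c i = 0 := by
  unfold mergeCounts
  split_ifs with hr hd
  · refine sum_eq_zero fun k hk => absurd (mem_filter.mp hk).2 ?_
    have hle : i ≤ i * 2 ^ k := Nat.le_mul_of_pos_right i (by positivity)
    rw [Nat.eq_zero_of_mul_le_of_lt (hc _) (hi.trans_le hle)]
    exact Nat.not_odd_zero
  · obtain ⟨m, -, rfl⟩ := hd
    rw [Nat.mul_div_cancel_left m two_pos]
    exact Nat.div_eq_of_lt (Nat.lt_of_mul_lt_mul_right (by linarith [hc m] : c m * m < 2 * m))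
  · exact Nat.eq_zero_of_mul_le_of_lt (hc i) hi

theorem splitCounts_eq_zero_of_lt (hg : ∀ i, g i * i ≤ n) {i : ℕ} (hi : n < i) :
    splitCounts M g i = 0 := by
  unfold splitCounts
  split_ifs with hM hbit
  · obtain ⟨r, -, k, rfl, hb⟩ := hbit
    have : g r < 2 ^ k := Nat.lt_of_mul_lt_mul_right (by linarith [hg r])
    simp [Nat.testBit_lt_two_pow this] at hb
  · simp [Nat.eq_zero_of_mul_le_of_lt (hg _) (by omega : n < 2 * i)]
  · exact Nat.eq_zero_of_mul_le_of_lt (hg i) hi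

theorem splitCounts_mergeCounts (hpos : ∀ m ∈ M, 0 < m) (hdouble : ∀ m ∈ M, 2 * m ∈ M)
    (hc : ∀ i, c i * i ≤ n) : splitCounts M (mergeCounts M n c) = c := by
  funext i
  by_cases hi : i ∈ M
  swap
  · rw [splitCounts_of_notMem hi, mergeCounts_of_notMem hdouble hi]
  obtain ⟨r, hr, k, rfl⟩ := exists_mem_roots_mul_two_pow hpos hi
  rw [splitCounts_mul_two_pow hdouble hr, mergeCounts_two_mul hi, mergeCounts_of_mem_roots hr]
  by_cases hk : k < n + 1
  · simp only [Nat.testBit_sum_two_pow, mem_filter, mem_range, hk, true_and, Nat.odd_iff]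
    split_ifs <;> omega
  · have hbig : n < r * 2 ^ k :=
      (Nat.lt_two_pow_self.trans_le (Nat.pow_le_pow_right two_pos (by omega))).trans_le
        (Nat.le_mul_of_pos_left _ (hpos r hr.1))
    simp [Nat.testBit_sum_two_pow, hk, Nat.eq_zero_of_mul_le_of_lt (hc _) hbig]

theorem mergeCounts_splitCounts (hpos : ∀ m ∈ M, 0 < m) (hdouble : ∀ m ∈ M, 2 * m ∈ M)
    (hg : ∀ i, g i * i ≤ n) : mergeCounts M n (splitCounts M g) = g := by
  funext i
  by_cases hi : i ∈ M
  swap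
  · rw [mergeCounts_of_notMem hdouble hi, splitCounts_of_notMem hi]
  by_cases hd : i ∈ doubles M
  · obtain ⟨m, hm, rfl⟩ := hd
    rw [mergeCounts_two_mul hm, splitCounts_div_two hm]
  have hr : i ∈ roots M := ⟨hi, hd⟩
  have hodd : ∀ k, Odd (splitCounts M g (i * 2 ^ k)) ↔ (g i).testBit k := by
    intro k
    rw [splitCounts_mul_two_pow hdouble hr, Nat.odd_iff]
    split_ifs <;> simp_all
  have hlt : g i < 2 ^ (n + 1) := by
    nlinarith [hg i, hpos i hi, Nat.lt_two_pow_self (n := n + 1)]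
  rw [mergeCounts_of_mem_roots hr]
  simp only [hodd]
  exact Nat.sum_range_filter_testBit hlt

open Classical in
theorem sum_roots_mergeCounts (hpos : ∀ m ∈ M, 0 < m) (hdouble : ∀ m ∈ M, 2 * m ∈ M)
    (hc : ∀ i, n < i → c i = 0) :
    ∑ r ∈ range (n + 1) with r ∈ roots M, mergeCounts M n c r * r =
      ∑ i ∈ range (n + 1) with i ∈ M, c i % 2 * i := by
  have hexpand : ∀ r ∈ roots M, mergeCounts M n c r * r =
      ∑ k ∈ range (n + 1), c (r * 2 ^ k) % 2 * (r * 2 ^ k) := by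
    intro r hr
    rw [mergeCounts_of_mem_roots hr, sum_filter, sum_mul]
    refine sum_congr rfl fun k _ => ?_
    rcases Nat.even_or_odd (c (r * 2 ^ k)) with h | h
    · simp [Nat.not_odd_iff_even.mpr h, Nat.even_iff.mp h]
    · simp [h, Nat.odd_iff.mp h, mul_comm]
  rw [sum_congr rfl fun r hr => hexpand r (mem_filter.mp hr).2, ← sum_product']
  refine sum_bij_ne_zero (fun p _ _ => p.1 * 2 ^ p.2) ?_ ?_ ?_ fun _ _ _ => rfl
  · rintro ⟨r, k⟩ hp hne
    simp only [mem_product, mem_filter, mem_range] at hp ⊢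
    refine ⟨?_, mul_two_pow_mem hdouble hp.1.2.1 k⟩
    by_contra hbig
    exact hne (by simp [hc (r * 2 ^ k) (by omega)])
  · rintro ⟨r, k⟩ hp - ⟨r', k'⟩ hp' - h
    simp only [mem_product, mem_filter] at hp hp'
    obtain ⟨rfl, rfl⟩ := eq_of_mul_two_pow_eq hdouble hp.1.2 hp'.1.2 h
    rfl
  · intro i hi hne
    simp only [mem_filter, mem_range] at hi
    obtain ⟨r, hr, k, rfl⟩ := exists_mem_roots_mul_two_pow hpos hi.2
    have hr_le : r ≤ r * 2 ^ k := Nat.le_mul_of_pos_right r (by positivity)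
    have hk_le : 2 ^ k ≤ r * 2 ^ k := Nat.le_mul_of_pos_left _ (hpos r hr.1)
    have hk : k < 2 ^ k := Nat.lt_two_pow_self
    refine ⟨(r, k), ?_, hne, rfl⟩
    simp only [mem_product, mem_filter, mem_range]
    exact ⟨⟨by omega, hr⟩, by omega⟩

open Classical in
theorem sum_doubles_mergeCounts (hmc : ∀ i, n < i → mergeCounts M n c i = 0) :
    ∑ i ∈ range (n + 1) with i ∈ doubles M, mergeCounts M n c i * i =
      ∑ m ∈ range (n + 1) with m ∈ M, c m / 2 * (2 * m) := by
  symm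
  refine sum_bij_ne_zero (fun m _ _ => 2 * m) ?_ ?_ ?_ ?_
  · intro m hm hne
    simp only [mem_filter, mem_range] at hm ⊢
    refine ⟨?_, m, hm.2, rfl⟩
    by_contra hbig
    rw [← mergeCounts_two_mul hm.2, hmc (2 * m) (by omega)] at hne
    simp at hne
  · intro _ _ _ _ _ _ h
    omega
  · intro i hi hne
    simp only [mem_filter, mem_range] at hi
    obtain ⟨hi, m, hm, rfl⟩ := hi
    dsimp only at hi hne
    refine ⟨m, ?_, ?_, rfl⟩
    · simp only [mem_filter, mem_range]
      exact ⟨by omega, hm⟩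
    · rwa [mergeCounts_two_mul hm] at hne
  · intro m hm _
    rw [mergeCounts_two_mul (mem_filter.mp hm).2]

theorem sum_mergeCounts (hpos : ∀ m ∈ M, 0 < m) (hdouble : ∀ m ∈ M, 2 * m ∈ M)
    (hc : ∀ i, n < i → c i = 0) (hmc : ∀ i, n < i → mergeCounts M n c i = 0) :
    ∑ i ∈ range (n + 1), mergeCounts M n c i * i = ∑ i ∈ range (n + 1), c i * i := by
  classical
  have hroots : ∀ s : Finset ℕ, ({i ∈ {i ∈ s | i ∈ M} | i ∉ doubles M} : Finset ℕ) =
      {i ∈ s | i ∈ roots M} := fun s => by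
    ext; simp [roots, and_assoc]
  have hdoubles : ∀ s : Finset ℕ, ({i ∈ {i ∈ s | i ∈ M} | i ∈ doubles M} : Finset ℕ) =
      {i ∈ s | i ∈ doubles M} := fun s => by
    ext i
    have := @doubles_subset _ hdouble i
    simp only [mem_filter]
    tauto
  rw [← sum_filter_add_sum_filter_not _ (· ∈ M) (fun i => mergeCounts M n c i * i),
    ← sum_filter_add_sum_filter_not _ (· ∈ M) (fun i => c i * i),
    ← sum_filter_add_sum_filter_not {i ∈ range (n + 1) | i ∈ M} (· ∈ doubles M), hroots,
    hdoubles, sum_roots_mergeCounts hpos hdouble hc, sum_doubles_mergeCounts hmc,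
    ← sum_add_distrib]
  congr 1
  · refine sum_congr rfl fun i _ => ?_
    have := Nat.div_add_mod (c i) 2
    nlinarith
  · refine sum_congr rfl fun i hi => ?_
    rw [mergeCounts_of_notMem hdouble (mem_filter.mp hi).2]

theorem ncard_mergeCounts (hdouble : ∀ m ∈ M, 2 * m ∈ M) (c : ℕ → ℕ) :
    {i | mergeCounts M n c i ≠ 0 ∧ i ∉ roots M}.ncard =
      {i | c i ≠ 0 ∧ (i ∉ M ∨ 2 ≤ c i)}.ncard := by
  classical
  set t : ℕ → ℕ := fun i => if i ∈ M then 2 * i else i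
  have ht : t.Injective := by
    intro a b h
    by_cases ha : a ∈ M <;> by_cases hb : b ∈ M <;>
      simp only [t, ha, hb, if_true, if_false] at h
    · omega
    · exact absurd (h ▸ hdouble a ha) hb
    · exact absurd (h ▸ hdouble b hb) ha
    · exact h
  have hpre : t ⁻¹' {i | mergeCounts M n c i ≠ 0 ∧ i ∉ roots M} =
      {i | c i ≠ 0 ∧ (i ∉ M ∨ 2 ≤ c i)} := by
    ext i
    by_cases hi : i ∈ M
    · have hti : t i = 2 * i := if_pos hi
      have : 2 * i ∉ roots M := fun h => h.2 ⟨i, hi, rfl⟩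
      rw [Set.mem_preimage, hti]
      simp [mergeCounts_two_mul hi, hi, this]
      omega
    · simp [t, hi, mergeCounts_of_notMem hdouble hi, roots]
  have hrange : {i | mergeCounts M n c i ≠ 0 ∧ i ∉ roots M} ⊆ Set.range t := by
    rintro b ⟨-, hb⟩
    by_cases hbM : b ∈ M
    · obtain ⟨m, hm, rfl⟩ : b ∈ doubles M := by_contra fun h => hb ⟨hbM, h⟩
      exact ⟨m, if_pos hm⟩
    · exact ⟨b, if_neg hbM⟩
  rw [← hpre, ← Set.ncard_image_of_injective (t ⁻¹' _) ht,
    Set.image_preimage_eq_of_subset hrange]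

end Counts

structure IsPartitionCounts (n : ℕ) (c : ℕ → ℕ) : Prop where
  zero : c 0 = 0
  eq_zero_of_lt : ∀ i, n < i → c i = 0
  sum_eq : ∑ i ∈ range (n + 1), c i * i = n

namespace IsPartitionCounts

variable {M : Set ℕ} {n : ℕ} {c : ℕ → ℕ}

theorem mul_le (h : IsPartitionCounts n c) (i : ℕ) : c i * i ≤ n := by
  by_cases hi : i < n + 1
  · exact h.sum_eq ▸ single_le_sum (fun j _ => Nat.zero_le (c j * j)) (mem_range.mpr hi)
  · simp [h.eq_zero_of_lt i (by omega)]

theorem mergeCounts (hpos : ∀ m ∈ M, 0 < m) (hdouble : ∀ m ∈ M, 2 * m ∈ M)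
    (h : IsPartitionCounts n c) : IsPartitionCounts n (mergeCounts M n c) where
  zero := by rw [mergeCounts_of_notMem hdouble fun h0 => (hpos 0 h0).false, h.zero]
  eq_zero_of_lt _ hi := mergeCounts_eq_zero_of_lt h.mul_le hi
  sum_eq := by
    rw [sum_mergeCounts hpos hdouble h.eq_zero_of_lt fun _ => mergeCounts_eq_zero_of_lt h.mul_le,
      h.sum_eq]

theorem splitCounts (hpos : ∀ m ∈ M, 0 < m) (hdouble : ∀ m ∈ M, 2 * m ∈ M)
    (h : IsPartitionCounts n c) : IsPartitionCounts n (splitCounts M c) where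
  zero := by rw [splitCounts_of_notMem fun h0 => (hpos 0 h0).false, h.zero]
  eq_zero_of_lt _ hi := splitCounts_eq_zero_of_lt h.mul_le hi
  sum_eq := by
    have hmerge := mergeCounts_splitCounts hpos hdouble h.mul_le
    rw [← sum_mergeCounts hpos hdouble (fun _ => splitCounts_eq_zero_of_lt h.mul_le)
      fun i hi => (congrFun hmerge i).trans (h.eq_zero_of_lt i hi), hmerge, h.sum_eq]

def toPartition (h : IsPartitionCounts n c) : n.Partition where
  parts := ∑ i ∈ range (n + 1), Multiset.replicate (c i) i
  parts_pos {i} hi := by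
    obtain ⟨j, -, hj⟩ := Multiset.mem_sum.mp hi
    obtain ⟨hcj, rfl⟩ := Multiset.mem_replicate.mp hj
    exact Nat.pos_of_ne_zero fun h0 => hcj (h0 ▸ h.zero)
  parts_sum := by simp [Multiset.sum_sum, h.sum_eq]

theorem count_toPartition (h : IsPartitionCounts n c) (i : ℕ) :
    h.toPartition.parts.count i = c i := by
  simp only [toPartition, Multiset.count_sum', Multiset.count_replicate, sum_ite_eq', mem_range]
  split_ifs with hi
  · rfl
  · exact (h.eq_zero_of_lt i (by omega)).symm

end IsPartitionCounts

theorem isPartitionCounts_count {n : ℕ} (π : n.Partition) :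
    IsPartitionCounts n (π.parts.count ·) where
  zero := Multiset.count_eq_zero.mpr fun h => (π.parts_pos h).false
  eq_zero_of_lt _ hi :=
    Multiset.count_eq_zero.mpr fun h => (Nat.Partition.le_of_mem_parts h).not_gt hi
  sum_eq := by
    classical
    conv_rhs => rw [← π.parts_sum, Finset.sum_multiset_count]
    refine (sum_subset (fun i hi => ?_) fun i _ hi => ?_).symm
    · exact mem_range.mpr <| Nat.lt_succ_of_le <|
        Nat.Partition.le_of_mem_parts (Multiset.mem_toFinset.mp hi)
    · simp [Multiset.count_eq_zero.mpr (mt Multiset.mem_toFinset.mpr hi)]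

section Partitions

variable {M : Set ℕ}

noncomputable def mergeEquiv (hpos : ∀ m ∈ M, 0 < m) (hdouble : ∀ m ∈ M, 2 * m ∈ M) (n : ℕ) :
    n.Partition ≃ n.Partition where
  toFun π := ((isPartitionCounts_count π).mergeCounts hpos hdouble).toPartition
  invFun π := ((isPartitionCounts_count π).splitCounts hpos hdouble).toPartition
  left_inv π := Nat.Partition.ext <| Multiset.ext.mpr fun i => by
    simp only [IsPartitionCounts.count_toPartition,
      splitCounts_mergeCounts hpos hdouble (isPartitionCounts_count π).mul_le]
  right_inv π := Nat.Partition.ext <| Multiset.ext.mpr fun i => by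
    simp only [IsPartitionCounts.count_toPartition,
      mergeCounts_splitCounts hpos hdouble (isPartitionCounts_count π).mul_le]

theorem ncard_mergeEquiv (hpos : ∀ m ∈ M, 0 < m) (hdouble : ∀ m ∈ M, 2 * m ∈ M) {n : ℕ}
    (π : n.Partition) :
    {i | i ∈ (mergeEquiv hpos hdouble n π).parts ∧ i ∉ roots M}.ncard =
      {i | i ∈ π.parts ∧ (i ∉ M ∨ (i ∈ M ∧ 2 ≤ π.parts.count i))}.ncard := by
  simp only [← Multiset.count_ne_zero, mergeEquiv, Equiv.coe_fn_mk,
    IsPartitionCounts.count_toPartition]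
  convert ncard_mergeCounts hdouble (fun i => π.parts.count i) using 4
  tauto

end Partitions

end Andrews

theorem andrews_equidistribution (M₁ : Set ℕ)
    (hpos : ∀ m ∈ M₁, 0 < m)
    (hdouble : ∀ m ∈ M₁, 2 * m ∈ M₁)
    (M₂ : Set ℕ) (hM₂ : M₂ = M₁ \ ((fun m => 2 * m) '' M₁)) :
    ∀ n j : ℕ,
      Nat.card {π : Nat.Partition n //
          {i : ℕ | i ∈ π.parts ∧ i ∉ M₂}.ncard = j} =
      Nat.card {π : Nat.Partition n //
          {i : ℕ | i ∈ π.parts ∧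
            (i ∉ M₁ ∨ (i ∈ M₁ ∧ 2 ≤ π.parts.count i))}.ncard = j} := by
  subst hM₂
  intro n j
  refine (Nat.card_congr ((Andrews.mergeEquiv hpos hdouble n).subtypeEquiv fun π => ?_)).symm
  rw [← Andrews.ncard_mergeEquiv hpos hdouble π]
  exact Iff.rfl
end

section
/- For every n and j ≥ 0, the number of partitions of n containing exactly j indices r ≥ 1 such that both 2r and 2r+2 occur as parts equals the number of partitions of n containing exactly j indices r ≥ 1 such that both r and r+1 occur with multiplicity ≥ 2. -/
/-!
Write the multiplicity of a part size `m` as `2 q_m + b_m` with `b_m ∈ {0, 1}`. Merging the pairs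
of equal parts `m, m` into parts `2m` gives the even parts, `2m` occurring `q_m` times; the leftover
distinct parts `{m | b_m = 1}` become odd parts under Glaisher's map (`2^a k` ↦ `2^a` copies of
`k`), which is injective by uniqueness of binary expansions. The resulting self-map of the
partitions of `n` is injective, hence bijective, and `2r` is a part of the image exactly when `r`
is repeated in the original partition, so it carries the second statistic to the first.
-/

theorem Nat.eq_of_ordCompl_eq_of_factorization_eq {p m m' : ℕ}
    (hc : ordCompl[p] m = ordCompl[p] m') (hf : m.factorization p = m'.factorization p) :
    m = m' :=
  calc m = ordProj[p] m * ordCompl[p] m := (Nat.ordProj_mul_ordCompl_eq_self m p).symm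
    _ = ordProj[p] m' * ordCompl[p] m' := by rw [hc, hf]
    _ = m' := Nat.ordProj_mul_ordCompl_eq_self m' p

namespace Multiset

section Halve

variable {α : Type*} [DecidableEq α]

def halve (s : Multiset α) : Multiset α :=
  ∑ a ∈ s.toFinset, replicate (s.count a / 2) a

def oddCounts (s : Multiset α) : Finset α :=
  s.toFinset.filter fun a => s.count a % 2 = 1

@[simp]
theorem count_halve (s : Multiset α) (a : α) : s.halve.count a = s.count a / 2 := by
  simp only [halve, count_sum', count_replicate, Finset.sum_ite_eq', mem_toFinset]
  split_ifs with h
  · rfl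
  · rw [count_eq_zero.mpr h, Nat.zero_div]

@[simp]
theorem count_oddCounts_val (s : Multiset α) (a : α) :
    s.oddCounts.val.count a = s.count a % 2 := by
  rw [count_eq_of_nodup s.oddCounts.nodup]
  split_ifs with h <;>
    rw [Finset.mem_val, oddCounts, Finset.mem_filter, mem_toFinset, ← count_pos] at h <;> omega

theorem mem_halve {s : Multiset α} {a : α} : a ∈ s.halve ↔ 2 ≤ s.count a := by
  rw [← count_pos, count_halve, Nat.div_pos_iff]
  omega

theorem notMem_oddCounts {s : Multiset α} {a : α} (h : a ∉ s) : a ∉ s.oddCounts :=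
  fun ha => h (mem_toFinset.1 (Finset.mem_of_mem_filter a ha))

theorem two_nsmul_halve_add_oddCounts (s : Multiset α) : 2 • s.halve + s.oddCounts.val = s := by
  ext a
  rw [count_add, count_nsmul, count_halve, count_oddCounts_val, Nat.div_add_mod]

end Halve

def glaisher (s : Multiset ℕ) : Multiset ℕ :=
  s.bind fun m => replicate (ordProj[2] m) (ordCompl[2] m)

theorem sum_glaisher (s : Multiset ℕ) : s.glaisher.sum = s.sum := by
  simp only [glaisher, sum_bind, sum_replicate, smul_eq_mul, Nat.ordProj_mul_ordCompl_eq_self,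
    map_id']

theorem odd_of_mem_glaisher {s : Multiset ℕ} (h0 : 0 ∉ s) {k : ℕ} (hk : k ∈ s.glaisher) :
    Odd k := by
  obtain ⟨m, hm, hk⟩ := mem_bind.1 hk
  rw [(mem_replicate.1 hk).2, ← Nat.not_even_iff_odd, even_iff_two_dvd]
  exact Nat.not_dvd_ordCompl Nat.prime_two (ne_of_mem_of_not_mem hm h0)

end Multiset

namespace Finset

def glaisherExponents (A : Finset ℕ) (k : ℕ) : Finset ℕ :=
  (A.filter (ordCompl[2] · = k)).image (·.factorization 2)

theorem factorization_mem_glaisherExponents {A : Finset ℕ} {m : ℕ} :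
    m.factorization 2 ∈ A.glaisherExponents (ordCompl[2] m) ↔ m ∈ A := by
  simp only [glaisherExponents, mem_image, mem_filter]
  constructor
  · rintro ⟨m', ⟨hm', hc⟩, hf⟩
    rwa [← Nat.eq_of_ordCompl_eq_of_factorization_eq hc hf]
  · exact fun hm => ⟨m, ⟨hm, rfl⟩, rfl⟩

theorem count_glaisher_val (A : Finset ℕ) (k : ℕ) :
    A.val.glaisher.count k = ∑ a ∈ A.glaisherExponents k, 2 ^ a := by
  rw [glaisherExponents, sum_image, sum_filter, Multiset.glaisher, Multiset.count_bind]
  · simp only [Multiset.count_replicate]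
    rfl
  · intro m hm m' hm' hf
    exact Nat.eq_of_ordCompl_eq_of_factorization_eq
      ((mem_filter.1 hm).2.trans (mem_filter.1 hm').2.symm) hf

theorem glaisher_val_injective : Function.Injective fun A : Finset ℕ => A.val.glaisher := by
  intro A B h
  have hexp (k : ℕ) : A.glaisherExponents k = B.glaisherExponents k :=
    geomSum_injective le_rfl <| by
      simpa only [count_glaisher_val] using congrArg (Multiset.count k) h
  ext m
  rw [← factorization_mem_glaisherExponents, hexp, factorization_mem_glaisherExponents]

end Finset

namespace Multiset

def mergePairs (s : Multiset ℕ) : Multiset ℕ :=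
  s.halve.map (2 * ·) + s.oddCounts.val.glaisher

theorem sum_mergePairs (s : Multiset ℕ) : s.mergePairs.sum = s.sum := by
  conv_rhs => rw [← two_nsmul_halve_add_oddCounts s]
  rw [mergePairs, sum_add, sum_add, sum_map_mul_left, map_id', sum_glaisher, sum_nsmul,
    smul_eq_mul]

variable {s : Multiset ℕ}

theorem filter_even_mergePairs (h0 : 0 ∉ s) :
    s.mergePairs.filter Even = s.halve.map (2 * ·) := by
  rw [mergePairs, filter_add, filter_eq_self.2, filter_eq_nil.2, add_zero]
  · exact fun k hk => Nat.not_even_iff_odd.2 (odd_of_mem_glaisher (notMem_oddCounts h0) hk)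
  · simp

theorem filter_odd_mergePairs (h0 : 0 ∉ s) :
    s.mergePairs.filter Odd = s.oddCounts.val.glaisher := by
  rw [mergePairs, filter_add, filter_eq_nil.2, filter_eq_self.2, zero_add]
  · exact fun k hk => odd_of_mem_glaisher (notMem_oddCounts h0) hk
  · simp

theorem two_mul_mem_mergePairs_iff (h0 : 0 ∉ s) (r : ℕ) :
    2 * r ∈ s.mergePairs ↔ 2 ≤ s.count r := by
  calc 2 * r ∈ s.mergePairs ↔ 2 * r ∈ s.mergePairs.filter Even := by
        rw [mem_filter, and_iff_left (even_two_mul r)]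
    _ ↔ r ∈ s.halve := by
        rw [filter_even_mergePairs h0, mem_map_of_injective (mul_right_injective₀ two_ne_zero)]
    _ ↔ 2 ≤ s.count r := mem_halve

theorem zero_notMem_mergePairs (h0 : 0 ∉ s) : 0 ∉ s.mergePairs := by
  rw [← mul_zero 2, two_mul_mem_mergePairs_iff h0, count_eq_zero.2 h0]
  omega

theorem mergePairs_injOn : Set.InjOn mergePairs {s | 0 ∉ s} := by
  intro s hs t ht h
  have hhalve : s.halve = t.halve := map_injective (mul_right_injective₀ two_ne_zero) <| by
    rw [← filter_even_mergePairs hs, h, filter_even_mergePairs ht]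
  have hodd : s.oddCounts = t.oddCounts := Finset.glaisher_val_injective <| by
    dsimp only
    rw [← filter_odd_mergePairs hs, h, filter_odd_mergePairs ht]
  rw [← two_nsmul_halve_add_oddCounts s, hhalve, hodd, two_nsmul_halve_add_oddCounts]

end Multiset

namespace Nat.Partition

variable {n : ℕ}

theorem zero_notMem_parts (π : n.Partition) : 0 ∉ π.parts :=
  fun h => (π.parts_pos h).false

def mergePairs (π : n.Partition) : n.Partition where
  parts := π.parts.mergePairs
  parts_pos hi := Nat.pos_of_ne_zero <|
    ne_of_mem_of_not_mem hi (Multiset.zero_notMem_mergePairs π.zero_notMem_parts)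
  parts_sum := by rw [Multiset.sum_mergePairs, π.parts_sum]

theorem mergePairs_bijective : Function.Bijective (mergePairs (n := n)) :=
  Finite.injective_iff_bijective.1 fun π σ h =>
    Nat.Partition.ext <| Multiset.mergePairs_injOn π.zero_notMem_parts σ.zero_notMem_parts <|
      congrArg parts h

theorem two_mul_mem_mergePairs_parts_iff (π : n.Partition) (r : ℕ) :
    2 * r ∈ π.mergePairs.parts ↔ 2 ≤ π.parts.count r :=
  Multiset.two_mul_mem_mergePairs_iff π.zero_notMem_parts r

end Nat.Partition

theorem consecutive_even_vs_consecutive_repeated (n j : ℕ) :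
    Nat.card {π : Nat.Partition n //
        {r : ℕ | 1 ≤ r ∧ 2 * r ∈ π.parts ∧ 2 * r + 2 ∈ π.parts}.ncard = j} =
    Nat.card {π : Nat.Partition n //
        {r : ℕ | 1 ≤ r ∧ 2 ≤ π.parts.count r ∧
          2 ≤ π.parts.count (r + 1)}.ncard = j} := by
  refine (Nat.card_congr <| Equiv.subtypeEquiv
    (Equiv.ofBijective _ Nat.Partition.mergePairs_bijective) fun π => ?_).symm
  simp only [Equiv.ofBijective_apply, show ∀ r : ℕ, 2 * r + 2 = 2 * (r + 1) by omega,
    Nat.Partition.two_mul_mem_mergePairs_parts_iff]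
end

section
/- The number of partitions of n with no pair of consecutive even parts (no r with both 2r and 2r+2 appearing) equals the number of partitions of n with no pair of consecutive repeated part sizes (no r with both r and r+1 having multiplicity ≥ 2). -/
/-!
A refinement of Glaisher's bijection. Fix `m > 0`. A partition `λ` of `n` splits in two ways into
a pair `(ν, H)` with `|ν| + m |H| = n`: either `ν` consists of the parts of `λ` not divisible by
`m` and `H` of the other parts divided by `m`, or each part `k` of `λ` occurs in `ν` as often as its
multiplicity mod `m` and in `H` as often as its multiplicity divided by `m`. In both cases `H` is
an arbitrary partition, while `ν` ranges over the partitions with no part divisible by `m`,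
resp. with no part repeated `m` times, which are equinumerous by Glaisher's theorem. So any
condition on `H` is met equally often on both sides. Having no parts `m r` and `m (r + 1)`, and
having no `r`, `r + 1` both of multiplicity at least `m`, both say that `H` has no two consecutive
parts; `m = 2` is the theorem.
-/

namespace Multiset

variable (m : ℕ) (s t : Multiset ℕ)

def multiplesDiv : Multiset ℕ := (s.filter (m ∣ ·)).map (· / m)

noncomputable def countDiv : Multiset ℕ :=
  Finsupp.toMultiset (s.toFinsupp.mapRange (· / m) (Nat.zero_div m))

noncomputable def countMod : Multiset ℕ :=
  Finsupp.toMultiset (s.toFinsupp.mapRange (· % m) (Nat.zero_mod m))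

@[simp]
lemma count_countDiv (k : ℕ) : (s.countDiv m).count k = s.count k / m := by
  simp [countDiv, Finsupp.count_toMultiset, toFinsupp_apply]

@[simp]
lemma count_countMod (k : ℕ) : (s.countMod m).count k = s.count k % m := by
  simp [countMod, Finsupp.count_toMultiset, toFinsupp_apply]

lemma countMod_add_nsmul_countDiv : s.countMod m + m • s.countDiv m = s := by
  ext k
  simp [Nat.mod_add_div]

lemma countDiv_le : s.countDiv m ≤ s :=
  le_iff_count.2 fun k => by simpa using Nat.div_le_self _ _

lemma countMod_le : s.countMod m ≤ s :=
  le_iff_count.2 fun k => by simpa using Nat.mod_le _ _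

variable {m s t}

lemma countMod_add_nsmul (ht : ∀ k, t.count k < m) : (t + m • s).countMod m = t := by
  ext k
  simp [Nat.mod_eq_of_lt (ht k)]

lemma countDiv_add_nsmul (ht : ∀ k, t.count k < m) : (t + m • s).countDiv m = s := by
  ext k
  have hm : 0 < m := (Nat.zero_le _).trans_lt (ht k)
  simp [Nat.add_mul_div_left _ _ hm, Nat.div_eq_of_lt (ht k)]

lemma mem_countDiv (hm : 0 < m) {r : ℕ} : r ∈ s.countDiv m ↔ m ≤ s.count r := by
  rw [← count_pos, count_countDiv, Nat.div_pos_iff]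
  omega

lemma mem_multiplesDiv (hm : 0 < m) {r : ℕ} : r ∈ s.multiplesDiv m ↔ m * r ∈ s := by
  simp only [multiplesDiv, mem_map, mem_filter]
  constructor
  · rintro ⟨_, ⟨hx, k, rfl⟩, rfl⟩
    rwa [Nat.mul_div_cancel_left _ hm]
  · exact fun h => ⟨m * r, ⟨h, dvd_mul_right _ _⟩, Nat.mul_div_cancel_left _ hm⟩

variable (m s)

lemma filter_not_dvd_add_map_mul_multiplesDiv :
    s.filter (¬ m ∣ ·) + (s.multiplesDiv m).map (m * ·) = s := by
  have hmap : ((s.filter (m ∣ ·)).map (· / m)).map (m * ·) = s.filter (m ∣ ·) := by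
    rw [map_map]
    exact (map_congr rfl fun x hx => Nat.mul_div_cancel' (of_mem_filter hx)).trans (map_id' _)
  rw [multiplesDiv, hmap, add_comm, filter_add_not]

variable {m s}

lemma filter_not_dvd_add_map_mul (ht : ∀ k ∈ t, ¬ m ∣ k) :
    (t + s.map (m * ·)).filter (¬ m ∣ ·) = t := by
  rw [filter_add, filter_eq_self.2 ht, filter_eq_nil.2 (by simp), add_zero]

lemma multiplesDiv_add_map_mul (hm : 0 < m) (ht : ∀ k ∈ t, ¬ m ∣ k) :
    (t + s.map (m * ·)).multiplesDiv m = s := by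
  rw [multiplesDiv, filter_add, filter_eq_nil.2 ht, filter_eq_self.2 (by simp), zero_add, map_map]
  exact (map_congr rfl fun x _ => Nat.mul_div_cancel_left x hm).trans (map_id' s)

variable (m s)

lemma sum_filter_not_dvd_add_mul_sum_multiplesDiv :
    (s.filter (¬ m ∣ ·)).sum + m * (s.multiplesDiv m).sum = s.sum := by
  conv_rhs => rw [← filter_not_dvd_add_map_mul_multiplesDiv m s]
  rw [sum_add, sum_map_mul_left, map_id']

lemma sum_countMod_add_mul_sum_countDiv :
    (s.countMod m).sum + m * (s.countDiv m).sum = s.sum := by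
  conv_rhs => rw [← countMod_add_nsmul_countDiv m s]
  rw [sum_add, sum_nsmul, smul_eq_mul]

lemma mul_sum_multiplesDiv_le : m * (s.multiplesDiv m).sum ≤ s.sum :=
  sum_filter_not_dvd_add_mul_sum_multiplesDiv m s ▸ Nat.le_add_left _ _

lemma mul_sum_countDiv_le : m * (s.countDiv m).sum ≤ s.sum :=
  sum_countMod_add_mul_sum_countDiv m s ▸ Nat.le_add_left _ _

end Multiset

theorem Nat.card_subtype_sigma_prod {ι : Type*} [Fintype ι] {β γ : ι → Type*}
    [∀ i, Finite (β i)] [∀ i, Finite (γ i)] (Q : ∀ i, γ i → Prop) :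
    Nat.card {x : Σ i, β i × γ i // Q x.1 x.2.2} =
      ∑ i, Nat.card (β i) * Nat.card {c // Q i c} := by
  let e : {x : Σ i, β i × γ i // Q x.1 x.2.2} ≃ Σ i, β i × {c // Q i c} :=
    { toFun x := ⟨x.1.1, x.1.2.1, x.1.2.2, x.2⟩
      invFun y := ⟨⟨y.1, y.2.1, y.2.2.1⟩, y.2.2.2⟩ }
  rw [Nat.card_congr e, Nat.card_sigma]
  simp only [Nat.card_prod]

lemma Nat.lt_div_add_one_iff_mul_le {n m c : ℕ} (hm : 0 < m) : c < n / m + 1 ↔ m * c ≤ n := by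
  rw [Nat.lt_succ_iff, Nat.le_div_iff_mul_le hm, mul_comm]

namespace Nat.Partition

open Multiset

variable {n m : ℕ}

lemma count_lt_of_mem_countRestricted (hm : 0 < m) {p : Partition n}
    (hp : p ∈ countRestricted n m) (k : ℕ) : p.parts.count k < m := by
  by_cases hk : k ∈ p.parts
  · exact (Finset.mem_filter.1 hp).2 k hk
  · rwa [count_eq_zero_of_notMem hk]

def multiplesDivFiberEquiv (hm : 0 < m) (c : Fin (n / m + 1)) :
    {p : Partition n // (p.parts.multiplesDiv m).sum = c} ≃
      restricted (n - m * c) (¬ m ∣ ·) × Partition c where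
  toFun p :=
    (⟨⟨p.1.parts.filter (¬ m ∣ ·), fun hi => p.1.parts_pos (mem_of_mem_filter hi), by
        have := p.1.parts.sum_filter_not_dvd_add_mul_sum_multiplesDiv m
        rw [p.1.parts_sum, p.2] at this
        omega⟩, by simp [restricted]⟩,
      ⟨p.1.parts.multiplesDiv m,
        fun hi => Nat.pos_of_mul_pos_left (p.1.parts_pos ((mem_multiplesDiv hm).1 hi)), p.2⟩)
  invFun x :=
    have hν : ∀ k ∈ x.1.1.parts, ¬ m ∣ k := (Finset.mem_filter.1 x.1.2).2
    ⟨⟨x.1.1.parts + x.2.parts.map (m * ·), fun hi => by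
        rcases Multiset.mem_add.1 hi with hi | hi
        · exact x.1.1.parts_pos hi
        · obtain ⟨k, hk, rfl⟩ := Multiset.mem_map.1 hi
          exact Nat.mul_pos hm (x.2.parts_pos hk), by
        have := (Nat.lt_div_add_one_iff_mul_le hm).1 c.isLt
        rw [sum_add, sum_map_mul_left, map_id', x.1.1.parts_sum, x.2.parts_sum]
        omega⟩,
      by simp only [multiplesDiv_add_map_mul hm hν, x.2.parts_sum]⟩
  left_inv p := Subtype.ext <| Partition.ext <| filter_not_dvd_add_map_mul_multiplesDiv m _
  right_inv x := by
    have hν : ∀ k ∈ x.1.1.parts, ¬ m ∣ k := (Finset.mem_filter.1 x.1.2).2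
    exact Prod.ext (Subtype.ext <| Partition.ext <| filter_not_dvd_add_map_mul hν)
      (Partition.ext <| multiplesDiv_add_map_mul hm hν)

noncomputable def countDivFiberEquiv (hm : 0 < m) (c : Fin (n / m + 1)) :
    {p : Partition n // (p.parts.countDiv m).sum = c} ≃
      countRestricted (n - m * c) m × Partition c where
  toFun p :=
    (⟨⟨p.1.parts.countMod m, fun hi => p.1.parts_pos (mem_of_le (countMod_le m _) hi), by
        have := p.1.parts.sum_countMod_add_mul_sum_countDiv m
        rw [p.1.parts_sum, p.2] at this
        omega⟩, by simp [countRestricted, Nat.mod_lt _ hm]⟩,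
      ⟨p.1.parts.countDiv m, fun hi => p.1.parts_pos (mem_of_le (countDiv_le m _) hi), p.2⟩)
  invFun x :=
    have hν := count_lt_of_mem_countRestricted hm x.1.2
    ⟨⟨x.1.1.parts + m • x.2.parts, fun hi => by
        rcases Multiset.mem_add.1 hi with hi | hi
        · exact x.1.1.parts_pos hi
        · exact x.2.parts_pos (mem_of_mem_nsmul hi), by
        have := (Nat.lt_div_add_one_iff_mul_le hm).1 c.isLt
        rw [sum_add, sum_nsmul, smul_eq_mul, x.1.1.parts_sum, x.2.parts_sum]
        omega⟩,
      by simp only [countDiv_add_nsmul hν, x.2.parts_sum]⟩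
  left_inv p := Subtype.ext <| Partition.ext <| countMod_add_nsmul_countDiv m _
  right_inv x := by
    have hν := count_lt_of_mem_countRestricted hm x.1.2
    exact Prod.ext (Subtype.ext <| Partition.ext <| countMod_add_nsmul hν)
      (Partition.ext <| countDiv_add_nsmul hν)

def sumAsFin (hm : 0 < m) (f : Multiset ℕ → Multiset ℕ) (hf : ∀ s, m * (f s).sum ≤ s.sum)
    (p : Partition n) : Fin (n / m + 1) :=
  ⟨(f p.parts).sum, (Nat.lt_div_add_one_iff_mul_le hm).2 ((hf _).trans_eq p.parts_sum)⟩

def equivSigmaMultiplesDiv (hm : 0 < m) :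
    Partition n ≃ Σ c : Fin (n / m + 1), restricted (n - m * c) (¬ m ∣ ·) × Partition c :=
  (Equiv.sigmaFiberEquiv (sumAsFin hm (multiplesDiv m) (mul_sum_multiplesDiv_le m))).symm.trans <|
    Equiv.sigmaCongrRight fun c =>
      (Equiv.subtypeEquivRight fun _ => Fin.ext_iff).trans (multiplesDivFiberEquiv hm c)

noncomputable def equivSigmaCountDiv (hm : 0 < m) :
    Partition n ≃ Σ c : Fin (n / m + 1), countRestricted (n - m * c) m × Partition c :=
  (Equiv.sigmaFiberEquiv (sumAsFin hm (countDiv m) (mul_sum_countDiv_le m))).symm.trans <|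
    Equiv.sigmaCongrRight fun c =>
      (Equiv.subtypeEquivRight fun _ => Fin.ext_iff).trans (countDivFiberEquiv hm c)

theorem card_multiplesDiv_eq_card_countDiv (hm : 0 < m) (Q : Multiset ℕ → Prop) :
    Nat.card {p : Partition n // Q (p.parts.multiplesDiv m)} =
      Nat.card {p : Partition n // Q (p.parts.countDiv m)} := by
  rw [Nat.card_congr ((equivSigmaMultiplesDiv hm).subtypeEquiv
      (p := fun p => Q (p.parts.multiplesDiv m)) (q := fun x => Q x.2.2.parts) fun _ => Iff.rfl),
    Nat.card_congr ((equivSigmaCountDiv hm).subtypeEquiv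
      (p := fun p => Q (p.parts.countDiv m)) (q := fun x => Q x.2.2.parts) fun _ => Iff.rfl),
    Nat.card_subtype_sigma_prod fun (c : Fin (n / m + 1)) (H : Partition c) => Q H.parts,
    Nat.card_subtype_sigma_prod fun (c : Fin (n / m + 1)) (H : Partition c) => Q H.parts]
  simp only [Nat.card_eq_fintype_card, Fintype.card_coe,
    card_restricted_eq_card_countRestricted _ hm]

theorem card_no_consecutive_multiples_eq_card_no_consecutive_repeated (hm : 0 < m) :
    Nat.card {p : Partition n //
        ∀ r, 1 ≤ r → ¬(m * r ∈ p.parts ∧ m * (r + 1) ∈ p.parts)} =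
      Nat.card {p : Partition n //
        ∀ r, 1 ≤ r → ¬(m ≤ p.parts.count r ∧ m ≤ p.parts.count (r + 1))} := by
  simpa only [mem_multiplesDiv hm, mem_countDiv hm] using
    card_multiplesDiv_eq_card_countDiv (n := n) hm
      fun H => ∀ r, 1 ≤ r → ¬(r ∈ H ∧ r + 1 ∈ H)

end Nat.Partition

theorem no_consecutive_even_vs_no_consecutive_repeated (n : ℕ) :
    Nat.card {π : Nat.Partition n //
        ∀ r : ℕ, 1 ≤ r → ¬(2 * r ∈ π.parts ∧ 2 * r + 2 ∈ π.parts)} =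
    Nat.card {π : Nat.Partition n //
        ∀ r : ℕ, 1 ≤ r →
          ¬(2 ≤ π.parts.count r ∧ 2 ≤ π.parts.count (r + 1))} := by
  simpa only [mul_add, mul_one] using
    Nat.Partition.card_no_consecutive_multiples_eq_card_no_consecutive_repeated (n := n) two_pos
end

section
/- The number of partitions of n in which no part size is a perfect square equals the number of partitions of n in which every part size i has multiplicity less than i. -/
/-!
Both sides are read off generating functions. Multiplying by `∏ᵢ (1 - Xⁱ)`, the generating
function of partitions into non-squares becomes `∏ᵢ (1 - X^(i²))`, and so does that of partitions
in which each part `i` occurs fewer than `i` times, since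
`(1 + Xⁱ + ⋯ + X^((i-1)i)) (1 - Xⁱ) = 1 - X^(i²)`.
The argument works for any multiplicity bound `m` with `i ↦ i * m i` injective, the forbidden
parts then being the numbers `i * m i`; constant `m` gives Glaisher's theorem.
-/

open Finset PowerSeries PowerSeries.WithPiTopology

namespace Nat.Partition

def countRestrictedBy (n : ℕ) (m : ℕ → ℕ) : Finset n.Partition :=
  univ.filter fun x ↦ ∀ i ∈ x.parts, x.parts.count i < m i

variable (R : Type*) [TopologicalSpace R] [T2Space R]

theorem hasProd_powerSeriesMk_card_countRestrictedBy [CommSemiring R] {m : ℕ → ℕ}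
    (hm : ∀ i, 0 < m (i + 1)) :
    HasProd (fun i ↦ ∑ j ∈ range (m (i + 1)), X ^ ((i + 1) * j))
      (PowerSeries.mk fun n ↦ (#(countRestrictedBy n m) : R)) := by
  nontriviality R using Subsingleton.eq_one (α := R⟦X⟧)
  convert! hasProd_genFun (fun i c ↦ if c < m i then (1 : R) else 0) using 1
  · ext1 i
    rw [sum_range_eq_add_Ico _ (hm i), sum_Ico_eq_sum_range]
    congrm $(by simp) + ?_
    trans ∑ k ∈ range (m (i + 1) - 1),
      (if k + 1 < m (i + 1) then (1 : R) else 0) • X ^ ((i + 1) * (k + 1))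
    · refine sum_congr rfl fun k hk ↦ ?_
      have : k + 1 < m (i + 1) := by grind
      simp [this, add_comm 1 k]
    · exact (tsum_eq_sum fun k hk ↦ smul_eq_zero_of_left (by simpa using hk) _).symm
  · simp_rw [genFun, countRestrictedBy, card_filter, Finsupp.prod, prod_boole]
    simp

theorem tprod_restricted_mul_tprod_one_sub_X_pow [CommRing R] [IsTopologicalRing R]
    {p : ℕ → Prop} [DecidablePred p] {m : ℕ → ℕ} (hm : ∀ i, 0 < m (i + 1))
    (hinj : Function.Injective fun i ↦ (i + 1) * m (i + 1))
    (hp : ∀ k, ¬ p (k + 1) ↔ ∃ i, (i + 1) * m (i + 1) = k + 1) :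
    (∏' i, if p (i + 1) then ∑' j, (X : R⟦X⟧) ^ ((i + 1) * j) else 1) * ∏' i, (1 - X ^ (i + 1)) =
      ∏' i, (1 - X ^ ((i + 1) * m (i + 1))) := by
  nontriviality R
  rw [← (multipliable_powerSeriesMk_card_restricted R p).tprod_mul
    (multipliable_one_sub_X_pow _)]
  simp_rw [ite_mul, one_mul, pow_mul]
  conv in fun b ↦ _ =>
    ext b
    rw [tsum_pow_mul_one_sub_of_constantCoeff_eq_zero (by simp)]
  refine tprod_eq_tprod_of_ne_one_bij (fun i ↦ (i.val + 1) * m (i.val + 1) - 1) ?_ ?_ ?_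
  · intro a b h
    have := hm a.val
    have := hm b.val
    exact Subtype.ext (hinj (by simp only at h ⊢; grind))
  · intro k hk
    obtain ⟨i, hi⟩ := (hp k).1 fun h ↦ hk (by simp [h])
    have hgi : (1 : R⟦X⟧) - (X ^ (i + 1)) ^ m (i + 1) ≠ 1 := by
      rw [← pow_mul, Ne, sub_eq_self]
      exact fun h ↦ by simpa using congrArg (coeff ((i + 1) * m (i + 1))) h
    exact ⟨⟨i, hgi⟩, by simp only [hi]; omega⟩
  · intro i
    have hi : (i.val + 1) * m (i.val + 1) - 1 + 1 = (i.val + 1) * m (i.val + 1) :=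
      Nat.sub_add_cancel (Nat.mul_pos i.val.succ_pos (hm i))
    rw [if_neg ((hp _).2 ⟨i, hi.symm⟩), hi, pow_mul]

theorem card_restricted_eq_card_countRestrictedBy (n : ℕ) {p : ℕ → Prop} [DecidablePred p]
    {m : ℕ → ℕ} (hm : ∀ i, 0 < m (i + 1)) (hinj : Function.Injective fun i ↦ (i + 1) * m (i + 1))
    (hp : ∀ k, ¬ p (k + 1) ↔ ∃ i, (i + 1) * m (i + 1) = k + 1) :
    #(restricted n p) = #(countRestrictedBy n m) := by
  suffices h : (PowerSeries.mk fun n ↦ (#(restricted n p) : ℤ)) =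
      PowerSeries.mk fun n ↦ (#(countRestrictedBy n m) : ℤ) by
    simpa using PowerSeries.ext_iff.mp h n
  have hcount := hasProd_powerSeriesMk_card_countRestrictedBy ℤ hm
  rw [powerSeriesMk_card_restricted_eq_tprod ℤ p, ← hcount.tprod_eq]
  apply mul_right_cancel₀ (tprod_one_sub_X_pow_ne_zero ℤ)
  rw [tprod_restricted_mul_tprod_one_sub_X_pow ℤ hm hinj hp,
    ← hcount.multipliable.tprod_mul (multipliable_one_sub_X_pow _)]
  exact tprod_congr fun i ↦ by simp_rw [pow_mul, geom_sum_mul_neg]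

end Nat.Partition

theorem Nat.isSquare_add_one_iff (k : ℕ) : IsSquare (k + 1) ↔ ∃ i, (i + 1) * (i + 1) = k + 1 := by
  constructor
  · rintro ⟨r, hr⟩
    obtain ⟨i, rfl⟩ := Nat.exists_eq_succ_of_ne_zero (n := r) (by rintro rfl; simp at hr)
    exact ⟨i, hr.symm⟩
  · rintro ⟨i, hi⟩
    exact ⟨i + 1, hi.symm⟩

theorem no_square_parts (n : ℕ) :
    Nat.card {π : Nat.Partition n // ∀ i ∈ π.parts, ¬ IsSquare i} =
    Nat.card {π : Nat.Partition n // ∀ i ∈ π.parts, π.parts.count i < i} := by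
  have hinj : Function.Injective fun i ↦ (i + 1) * (i + 1) :=
    fun a b h ↦ by simpa using Nat.mul_self_inj.mp h
  have hcard := Nat.Partition.card_restricted_eq_card_countRestrictedBy n
    (p := (¬ IsSquare ·)) (m := id) (fun i ↦ i.succ_pos) hinj
    fun k ↦ not_not.trans (Nat.isSquare_add_one_iff k)
  simpa [Nat.card_eq_fintype_card, Fintype.card_subtype, Nat.Partition.restricted,
    Nat.Partition.countRestrictedBy] using hcard
end

section
/- Fix d > 1. The number of partitions of n with no part divisible by d equals the number of partitions of n in which every part has multiplicity less than d (Glaisher's theorem). -/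
theorem glaisher (d : ℕ) (hd : 1 < d) (n : ℕ) :
    Nat.card {π : Nat.Partition n // ∀ i ∈ π.parts, ¬ d ∣ i} =
    Nat.card {π : Nat.Partition n // ∀ i ∈ π.parts, π.parts.count i < d} := by
  simpa only [Nat.card_eq_fintype_card, Fintype.card_subtype, Nat.Partition.restricted,
    Nat.Partition.countRestricted] using
    Nat.Partition.card_restricted_eq_card_countRestricted n (zero_lt_one.trans hd)
end
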